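/- Let (Q,+) be a diassociative loop. Then the set ZEnd(Q,+) of all central endomorphisms of (Q,+) is an associative ring (possibly without unity) with respect to pointwise addition, pointwise negation, the zero endomorphism, and composition as multiplication. -/
import Mathlib


/- Preamble: diassociative loops, written additively.
   A loop is a set with `+`, a neutral element `0`, and unique left/right
   solvability.  Diassociativity is stated as: the subloop generated by any
   two elements (closure under `+`, negation and both divisions) is
   associative; in particular every element has a two-sided inverse `-x`
   (included as part of the structure, as it is uniquely determined). -/

universe u

section Preamble
variable {Q : Type u}

/-- Membership in the subloop of `Q` generated by the pair `a, b`
    (closure under `0`, negation, addition and both divisions). -/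
inductive GenBy [Add Q] [Zero Q] [Neg Q] (a b : Q) : Q → Prop
  | base_left : GenBy a b a
  | base_right : GenBy a b b
  | zero : GenBy a b 0
  | neg : ∀ x, GenBy a b x → GenBy a b (-x)
  | add : ∀ x y, GenBy a b x → GenBy a b y → GenBy a b (x + y)
  | ldiv : ∀ x y z, GenBy a b x → GenBy a b y → x + z = y → GenBy a b z
  | rdiv : ∀ x y z, GenBy a b x → GenBy a b y → z + x = y → GenBy a b z

/-- A diassociative loop `(Q,+)`: a loop in which the subloop generated by
    any pair of elements is a group (stated as associativity on that
    subloop); every element has a two-sided inverse `-x`. -/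
class DiassocLoop (Q : Type u) extends Add Q, Zero Q, Neg Q where
  zero_add : ∀ x : Q, 0 + x = x
  add_zero : ∀ x : Q, x + 0 = x
  exu_left : ∀ a b : Q, ∃! x : Q, a + x = b
  exu_right : ∀ a b : Q, ∃! y : Q, y + a = b
  neg_add_cancel : ∀ x : Q, -x + x = 0
  add_neg_cancel : ∀ x : Q, x + -x = 0
  diassoc : ∀ a b x y z : Q, GenBy a b x → GenBy a b y → GenBy a b z →
      (x + y) + z = x + (y + z)

variable [Add Q] [Zero Q] [Neg Q]

/-- Natural multiple `n • x = x + (x + (⋯ + 0))`. -/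
def nsmulL : ℕ → Q → Q
  | 0, _ => 0
  | n + 1, x => x + nsmulL n x

/-- Integer multiple `m • x` (unambiguous by diassociativity). -/
def zsmulL : ℤ → Q → Q
  | Int.ofNat n, x => nsmulL n x
  | Int.negSucc n, x => -(nsmulL (n + 1) x)

/-- `a` belongs to the nucleus `N(Q,+)`. -/
def inNucleus (a : Q) : Prop :=
  ∀ x y : Q, (a + x) + y = a + (x + y) ∧ (x + a) + y = x + (a + y) ∧
    (x + y) + a = x + (y + a)

/-- `a` belongs to the Moufang center `K(Q,+)`. -/
def inMoufangCenter (a : Q) : Prop :=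
  ∀ x y : Q, (a + a) + (x + y) = (a + x) + (a + y)

/-- `a` belongs to the center `Z(Q,+) = N(Q,+) ∩ K(Q,+)`. -/
def inCenter (a : Q) : Prop := inNucleus a ∧ inMoufangCenter a

/-- `f` is an endomorphism of `(Q,+)`. -/
def IsEndo (f : Q → Q) : Prop := ∀ x y : Q, f (x + y) = f x + f y

/-- `f` is a central endomorphism of `(Q,+)`: an endomorphism with
    `f(Q) ⊆ Z(Q,+)`. -/
def IsCentralEndo (f : Q → Q) : Prop := IsEndo f ∧ ∀ x : Q, inCenter (f x)

/-- `f` is an `m`-quasicentral endomorphism of `(Q,+)`: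
    `m•x + f(x) ∈ Z(Q,+)` for all `x`. -/
def IsQuasicentral (m : ℤ) (f : Q → Q) : Prop :=
  IsEndo f ∧ ∀ x : Q, inCenter (zsmulL m x + f x)

end Preamble

section Helpers
variable {Q : Type u} [DiassocLoop Q]

open DiassocLoop

lemma lcancel {a x y : Q} (h : a + x = a + y) : x = y := by
  obtain ⟨z, _, hu⟩ := exu_left a (a + y)
  exact (hu x h).trans (hu y rfl).symm

lemma rcancel {a x y : Q} (h : x + a = y + a) : x = y := by
  obtain ⟨z, _, hu⟩ := exu_right a (y + a)
  exact (hu x h).trans (hu y rfl).symm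

lemma nuc1 {a : Q} (h : inNucleus a) (x y : Q) : (a + x) + y = a + (x + y) := (h x y).1
lemma nuc2 {a : Q} (h : inNucleus a) (x y : Q) : (x + a) + y = x + (a + y) := (h x y).2.1
lemma nuc3 {a : Q} (h : inNucleus a) (x y : Q) : (x + y) + a = x + (y + a) := (h x y).2.2

lemma center_comm {a : Q} (ha : inCenter a) (x : Q) : a + x = x + a := by
  have hm := ha.2 x 0
  rw [DiassocLoop.add_zero, DiassocLoop.add_zero] at hm
  -- hm : (a+a)+x = (a+x)+a
  have h1 : (a + a) + x = a + (a + x) := nuc1 ha.1 a x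
  have h2 : (a + x) + a = a + (x + a) := nuc3 ha.1 a x
  exact lcancel (h1.symm.trans (hm.trans h2))

lemma moufang_of_nuc_comm {a : Q} (hn : inNucleus a)
    (hc : ∀ x : Q, a + x = x + a) : inMoufangCenter a := by
  intro x y
  calc (a + a) + (x + y) = a + (a + (x + y)) := nuc1 hn a (x + y)
    _ = a + ((a + x) + y) := by rw [nuc1 hn x y]
    _ = (a + (a + x)) + y := (nuc1 hn (a + x) y).symm
    _ = ((a + x) + a) + y := by rw [hc (a + x)]
    _ = (a + x) + (a + y) := nuc2 hn (a + x) y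

lemma center_zero : inCenter (0 : Q) := by
  constructor
  · intro x y
    refine ⟨?_, ?_, ?_⟩ <;> simp only [DiassocLoop.zero_add, DiassocLoop.add_zero]
  · intro x y
    simp only [DiassocLoop.zero_add, DiassocLoop.add_zero]

lemma nucleus_add {a b : Q} (ha : inNucleus a) (hb : inNucleus b) :
    inNucleus (a + b) := by
  intro x y
  refine ⟨?_, ?_, ?_⟩
  · calc ((a + b) + x) + y = (a + (b + x)) + y := by rw [nuc1 ha b x]
      _ = a + ((b + x) + y) := nuc1 ha (b + x) y
      _ = a + (b + (x + y)) := by rw [nuc1 hb x y]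
      _ = (a + b) + (x + y) := (nuc1 ha b (x + y)).symm
  · calc (x + (a + b)) + y = ((x + a) + b) + y := by rw [nuc2 ha x b]
      _ = (x + a) + (b + y) := nuc2 hb (x + a) y
      _ = x + (a + (b + y)) := nuc2 ha x (b + y)
      _ = x + ((a + b) + y) := by rw [nuc1 ha b y]
  · calc (x + y) + (a + b) = ((x + y) + a) + b := (nuc2 ha (x + y) b).symm
      _ = (x + (y + a)) + b := by rw [nuc3 ha x y]
      _ = x + ((y + a) + b) := nuc3 hb x (y + a)
      _ = x + (y + (a + b)) := by rw [nuc3 hb y a]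

lemma center_add {a b : Q} (ha : inCenter a) (hb : inCenter b) :
    inCenter (a + b) := by
  have hn : inNucleus (a + b) := nucleus_add ha.1 hb.1
  refine ⟨hn, moufang_of_nuc_comm hn fun x => ?_⟩
  calc (a + b) + x = a + (b + x) := nuc1 ha.1 b x
    _ = a + (x + b) := by rw [center_comm hb x]
    _ = (a + x) + b := (nuc1 ha.1 x b).symm
    _ = (x + a) + b := by rw [center_comm ha x]
    _ = x + (a + b) := nuc2 ha.1 x b

lemma nucleus_neg {a : Q} (ha : inNucleus a) : inNucleus (-a) := by
  intro x y
  refine ⟨?_, ?_, ?_⟩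
  · apply lcancel (a := a)
    calc a + ((-a + x) + y) = (a + (-a + x)) + y := (nuc1 ha (-a + x) y).symm
      _ = ((a + -a) + x) + y := by rw [nuc1 ha (-a) x]
      _ = x + y := by rw [DiassocLoop.add_neg_cancel, DiassocLoop.zero_add]
      _ = (a + -a) + (x + y) := by rw [DiassocLoop.add_neg_cancel, DiassocLoop.zero_add]
      _ = a + (-a + (x + y)) := nuc1 ha (-a) (x + y)
  · have hx : (x + -a) + a = x := by
      rw [nuc3 ha x (-a), DiassocLoop.neg_add_cancel, DiassocLoop.add_zero]
    calc (x + -a) + y = (x + -a) + ((a + -a) + y) := by rw [DiassocLoop.add_neg_cancel, DiassocLoop.zero_add]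
      _ = (x + -a) + (a + (-a + y)) := by rw [nuc1 ha (-a) y]
      _ = ((x + -a) + a) + (-a + y) := (nuc2 ha (x + -a) (-a + y)).symm
      _ = x + (-a + y) := by rw [hx]
  · have hy : (y + -a) + a = y := by
      rw [nuc3 ha y (-a), DiassocLoop.neg_add_cancel, DiassocLoop.add_zero]
    apply rcancel (a := a)
    calc ((x + y) + -a) + a = (x + y) + (-a + a) := nuc3 ha (x + y) (-a)
      _ = x + y := by rw [DiassocLoop.neg_add_cancel, DiassocLoop.add_zero]
      _ = x + ((y + -a) + a) := by rw [hy]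
      _ = (x + (y + -a)) + a := (nuc3 ha x (y + -a)).symm

lemma center_neg {a : Q} (ha : inCenter a) : inCenter (-a) := by
  have hn : inNucleus (-a) := nucleus_neg ha.1
  refine ⟨hn, moufang_of_nuc_comm hn fun x => ?_⟩
  apply rcancel (a := a)
  calc (-a + x) + a = -a + (x + a) := nuc1 hn x a
    _ = -a + (a + x) := by rw [center_comm ha x]
    _ = (-a + a) + x := (nuc1 hn a x).symm
    _ = x := by rw [DiassocLoop.neg_add_cancel, DiassocLoop.zero_add]
    _ = x + (-a + a) := by rw [DiassocLoop.neg_add_cancel, DiassocLoop.add_zero]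
    _ = (x + -a) + a := (nuc3 ha.1 x (-a)).symm

lemma neg_add_rev' {a b : Q} (ha : inNucleus a) (hb : inNucleus b) :
    -(a + b) = -b + -a := by
  apply lcancel (a := a + b)
  rw [DiassocLoop.add_neg_cancel]
  symm
  calc (a + b) + (-b + -a) = a + (b + (-b + -a)) := nuc1 ha b (-b + -a)
    _ = a + ((b + -b) + -a) := by rw [nuc1 hb (-b) (-a)]
    _ = 0 := by rw [DiassocLoop.add_neg_cancel, DiassocLoop.zero_add, DiassocLoop.add_neg_cancel]

lemma endo_zero {f : Q → Q} (hf : IsEndo f) : f 0 = 0 := by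
  have h : f 0 + f 0 = f 0 + 0 := by rw [DiassocLoop.add_zero, ← hf 0 0, DiassocLoop.zero_add]
  exact lcancel h

lemma endo_neg {f : Q → Q} (hf : IsEndo f) (x : Q) : f (-x) = -(f x) := by
  apply lcancel (a := f x)
  rw [← hf x (-x), DiassocLoop.add_neg_cancel, DiassocLoop.add_neg_cancel, endo_zero hf]

end Helpers

/- STATEMENT 1: Corollary 2.2.  The set `ZEnd(Q,+)` of central endomorphisms
   of a diassociative loop `(Q,+)` is an associative ring (possibly without
   unity) under pointwise addition, pointwise negation, the zero
   endomorphism, and composition as multiplication. -/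
theorem centralEnd_nonUnitalRing {Q : Type u} [DiassocLoop Q] :
    ∃ inst : NonUnitalRing {f : Q → Q // IsCentralEndo f},
      (∀ F G : {f : Q → Q // IsCentralEndo f},
        (inst.add F G).1 = fun x : Q => F.1 x + G.1 x) ∧
      (∀ F : {f : Q → Q // IsCentralEndo f},
        (inst.neg F).1 = fun x : Q => -(F.1 x)) ∧
      ((inst.zero.1 : Q → Q) = fun _ : Q => (0 : Q)) ∧
      (∀ F G : {f : Q → Q // IsCentralEndo f},
        (inst.mul F G).1 = F.1 ∘ G.1) := by
  classical
  set T := {f : Q → Q // IsCentralEndo f} with hT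
  -- pointwise addition
  have haddC : ∀ F G : T, IsCentralEndo (fun x : Q => F.1 x + G.1 x) := by
    rintro ⟨f, hf, hfc⟩ ⟨g, hg, hgc⟩
    refine ⟨fun x y => ?_, fun x => center_add (hfc x) (hgc x)⟩
    simp only
    rw [hf x y, hg x y]
    calc (f x + f y) + (g x + g y)
        = f x + (f y + (g x + g y)) := nuc1 (hfc x).1 (f y) (g x + g y)
      _ = f x + ((f y + g x) + g y) := by rw [nuc1 (hfc y).1 (g x) (g y)]
      _ = f x + ((g x + f y) + g y) := by rw [center_comm (hfc y) (g x)]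
      _ = f x + (g x + (f y + g y)) := by rw [nuc1 (hgc x).1 (f y) (g y)]
      _ = (f x + g x) + (f y + g y) := (nuc1 (hfc x).1 (g x) (f y + g y)).symm
  have hnegC : ∀ F : T, IsCentralEndo (fun x : Q => -(F.1 x)) := by
    rintro ⟨f, hf, hfc⟩
    refine ⟨fun x y => ?_, fun x => center_neg (hfc x)⟩
    simp only
    rw [hf x y, neg_add_rev' (hfc x).1 (hfc y).1,
      center_comm (center_neg (hfc y)) (-(f x))]
  have hzeroC : IsCentralEndo (fun _ : Q => (0 : Q)) :=
    ⟨fun x y => (DiassocLoop.zero_add (0 : Q)).symm, fun _ => center_zero⟩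
  have hmulC : ∀ F G : T, IsCentralEndo (F.1 ∘ G.1) := by
    rintro ⟨f, hf, hfc⟩ ⟨g, hg, hgc⟩
    refine ⟨fun x y => ?_, fun x => hfc _⟩
    show f (g (x + y)) = f (g x) + f (g y)
    rw [hg x y, hf (g x) (g y)]
  let Fadd : T → T → T := fun F G => ⟨_, haddC F G⟩
  let Fneg : T → T := fun F => ⟨_, hnegC F⟩
  let Fzero : T := ⟨_, hzeroC⟩
  let Fmul : T → T → T := fun F G => ⟨F.1 ∘ G.1, hmulC F G⟩
  letI : Add T := ⟨Fadd⟩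
  letI : Zero T := ⟨Fzero⟩
  letI : Neg T := ⟨Fneg⟩
  letI : Mul T := ⟨Fmul⟩
  have ext1 : ∀ F G : T, (∀ x, F.1 x = G.1 x) → F = G := fun F G h =>
    Subtype.ext (funext h)
  refine ⟨{ add := Fadd, zero := Fzero, neg := Fneg, mul := Fmul
            add_assoc := ?_, zero_add := ?_, add_zero := ?_
            nsmul := nsmulRec, zsmul := zsmulRec
            neg_add_cancel := ?_, add_comm := ?_
            left_distrib := ?_, right_distrib := ?_
            zero_mul := ?_, mul_zero := ?_, mul_assoc := ?_ },
          fun F G => rfl, fun F => rfl, rfl, fun F G => rfl⟩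
  · rintro F G H
    refine ext1 _ _ fun x => ?_
    exact nuc1 (F.2.2 x).1 (G.1 x) (H.1 x)
  · intro F
    exact ext1 _ _ fun x => DiassocLoop.zero_add (F.1 x)
  · intro F
    exact ext1 _ _ fun x => DiassocLoop.add_zero (F.1 x)
  · intro F
    exact ext1 _ _ fun x => DiassocLoop.neg_add_cancel (F.1 x)
  · intro F G
    exact ext1 _ _ fun x => center_comm (F.2.2 x) (G.1 x)
  · intro F G H
    refine ext1 _ _ fun x => ?_
    exact F.2.1 (G.1 x) (H.1 x)
  · intro F G H
    exact ext1 _ _ fun x => rfl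
  · intro F
    exact ext1 _ _ fun x => rfl
  · intro F
    refine ext1 _ _ fun x => ?_
    exact endo_zero F.2.1
  · intro F G H
    exact ext1 _ _ fun x => rfl
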